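/- arXiv:0905.2040 — 7 statements merged into one kernel-verified Lean document; each statement's English description precedes it below -/
import Mathlib

section
/- A loop (Q,·,\,/) is a universal Osborn loop (i.e., every principal isotope of Q is an Osborn loop) if and only if it satisfies the identity: x · u\{(yz)/v · [u\(xv)]} = (x · u\{[y(u\([(uv)/(u\(xv))]·v))]/v · [u\(xv)]})/v · u\[((uz)/v)(u\(xv))] for all x,y,z,u,v ∈ Q. -/
/-!
In the `u,v`-principal isotope the left inverse of `x` is explicit, namely
`((uv)/(u\x))·v`, so its Osborn property is a plain identity in `x y z`. The
substitution `x ↦ xv`, `y ↦ yv`, `z ↦ uz` is bijective and turns the isotope's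
products `(xv)∗(uz) = xz` back into products of `Q`, which yields the displayed identity.
-/

/-- A loop: a set with multiplication, left division `ld`, right division `rd`
and a two-sided identity `e`. -/
structure LoopStr (Q : Type*) where
  mul : Q → Q → Q
  ld : Q → Q → Q
  rd : Q → Q → Q
  e : Q
  mul_ld : ∀ x y, mul x (ld x y) = y
  rd_mul : ∀ x y, mul (rd y x) x = y
  ld_mul : ∀ x y, ld x (mul x y) = y
  mul_rd : ∀ x y, rd (mul y x) x = y
  one_mul : ∀ x, mul e x = x
  mul_one : ∀ x, mul x e = x

namespace LoopStr

variable {Q : Type*} (L : LoopStr Q)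

/-- The left inverse `x^λ` of `x`, i.e. the unique element with `x^λ · x = e`. -/
def lam (x : Q) : Q := L.rd L.e x

/-- The right inverse `x^ρ` of `x`, i.e. the unique element with `x · x^ρ = e`. -/
def rho (x : Q) : Q := L.ld x L.e

/-- A binary operation `op` with identity `e'` is Osborn if, whenever `xl` is a
left inverse of `x` w.r.t. `op`, the Osborn identity
`x(yz·x) = (x(y·x^λ·x))·(zx)` holds. -/
def IsOsbornOp (op : Q → Q → Q) (e' : Q) : Prop :=
  ∀ x y z xl, op xl x = e' →
    op x (op (op y z) x) = op (op x (op (op y xl) x)) (op z x)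

/-- The `u,v`-principal isotope: `x ∗ y = (x/v)·(u\y)`; its identity is `u·v`. -/
def isotope (u v : Q) : Q → Q → Q := fun x y => L.mul (L.rd x v) (L.ld u y)

/-- `Q` is a universal Osborn loop: every `u,v`-principal isotope is Osborn. -/
def Universal : Prop := ∀ u v, IsOsbornOp (L.isotope u v) (L.mul u v)

/-- `Q` is a left universal Osborn loop: every left principal isotope
`x ∗ y = (x/v)·y` (identity `v`) is Osborn. -/
def LeftUniversal : Prop := ∀ v, IsOsbornOp (fun x y => L.mul (L.rd x v) y) v

/-- `Q` is a right universal Osborn loop: every right principal isotope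
`x ∗ y = x·(u\y)` (identity `u`) is Osborn. -/
def RightUniversal : Prop := ∀ u, IsOsbornOp (fun x y => L.mul x (L.ld u y)) u

end LoopStr

namespace LoopStr

variable {Q : Type*} (L : LoopStr Q)

theorem isOsbornOp_iff_of_leftInv {op : Q → Q → Q} {e' : Q} (li : Q → Q)
    (hli : ∀ x xl, op xl x = e' ↔ xl = li x) :
    IsOsbornOp op e' ↔
      ∀ x y z, op x (op (op y z) x) = op (op x (op (op y (li x)) x)) (op z x) :=
  ⟨fun h x y z => h x y z _ ((hli _ _).2 rfl),
    fun h x y z xl hxl => (hli x xl).1 hxl ▸ h x y z⟩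

theorem isotope_eq_iff {u v a b c : Q} :
    L.isotope u v a b = c ↔ a = L.mul (L.rd c (L.ld u b)) v := by
  constructor <;> rintro rfl <;> simp only [isotope, mul_rd, rd_mul]

def isotopeLam (u v x : Q) : Q := L.mul (L.rd (L.mul u v) (L.ld u x)) v

theorem isOsbornOp_isotope_iff (u v : Q) :
    IsOsbornOp (L.isotope u v) (L.mul u v) ↔ ∀ x y z,
      let X := L.mul x v
      let op := L.isotope u v
      op X (op (op (L.mul y v) (L.mul u z)) X) =
        op (op X (op (op (L.mul y v) (L.isotopeLam u v X)) X)) (op (L.mul u z) X) := by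
  rw [isOsbornOp_iff_of_leftInv (L.isotopeLam u v) fun _ _ => L.isotope_eq_iff]
  refine ⟨fun h x y z => h _ _ _, fun h X Y Z => ?_⟩
  simpa only [rd_mul, mul_ld] using h (L.rd X v) (L.rd Y v) (L.ld u Z)

end LoopStr

open LoopStr

theorem universal_osborn_iff {Q : Type*} (L : LoopStr Q) :
    L.Universal ↔ ∀ x y z u v,
      L.mul x (L.ld u (L.mul (L.rd (L.mul y z) v) (L.ld u (L.mul x v)))) =
      L.mul
        (L.rd
          (L.mul x
            (L.ld u
              (L.mul
                (L.rd
                  (L.mul y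
                    (L.ld u (L.mul (L.rd (L.mul u v) (L.ld u (L.mul x v))) v)))
                  v)
                (L.ld u (L.mul x v)))))
          v)
        (L.ld u (L.mul (L.rd (L.mul u z) v) (L.ld u (L.mul x v)))) := by
  simp only [Universal, L.isOsbornOp_isotope_iff, isotope, isotopeLam, L.mul_rd, L.ld_mul]
  exact ⟨fun h x y z u v => h u v x y z, fun h u v x y z => h x y z u v⟩
end

section
/- A loop (Q,·,\,/) is a left universal Osborn loop (i.e., every left principal isotope x∗y = (x/v)·y is an Osborn loop) if and only if it obeys the identity x·[(y·zv)/v · (xv)] = (x·{[y([v/(xv)]·v)]/v · (xv)})/v · [z·(xv)] for all x,y,z,v ∈ Q. -/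
/-!
In the left principal isotope `x ∗ y = (x/v)·y` the left inverse of `X` is forced to be
`(v/X)·v`, and every element is of the form `x·v`. Writing `X = xv`, `Y = yv`, `Z = zv`, the
cancellation `(a·v)/v = a` turns the Osborn identity of the isotope into the stated identity
of `Q`.
-/

namespace LoopStr

variable {Q : Type*} (L : LoopStr Q)

theorem isOsbornOp_iff_of_leftInverse {op : Q → Q → Q} {e : Q} (inv : Q → Q)
    (h : ∀ x xl, op xl x = e ↔ xl = inv x) :
    IsOsbornOp op e ↔
      ∀ x y z, op x (op (op y z) x) = op (op x (op (op y (inv x)) x)) (op z x) :=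
  ⟨fun hO x y z => hO x y z (inv x) ((h x _).2 rfl),
    fun hO x y z xl hxl => ((h x xl).1 hxl) ▸ hO x y z⟩

def leftIsotope (v x y : Q) : Q := L.mul (L.rd x v) y

theorem mul_eq_iff_eq_rd {a x b : Q} : L.mul a x = b ↔ a = L.rd b x :=
  ⟨fun h => by rw [← h, mul_rd], fun h => by rw [h, rd_mul]⟩

theorem rd_eq_iff_eq_mul {a v c : Q} : L.rd a v = c ↔ a = L.mul c v :=
  ⟨fun h => by rw [← h, rd_mul], fun h => by rw [h, mul_rd]⟩

theorem mul_right_surjective (v : Q) : Function.Surjective fun x => L.mul x v :=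
  fun X => ⟨L.rd X v, L.rd_mul v X⟩

theorem leftIsotope_eq_iff (v x xl : Q) :
    L.leftIsotope v xl x = v ↔ xl = L.mul (L.rd v x) v := by
  rw [leftIsotope, mul_eq_iff_eq_rd, rd_eq_iff_eq_mul]

theorem isOsbornOp_leftIsotope_iff (v : Q) :
    IsOsbornOp (L.leftIsotope v) v ↔ ∀ x y z,
      L.mul x (L.mul (L.rd (L.mul y (L.mul z v)) v) (L.mul x v)) =
      L.mul
        (L.rd
          (L.mul x
            (L.mul (L.rd (L.mul y (L.mul (L.rd v (L.mul x v)) v)) v)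
              (L.mul x v)))
          v)
        (L.mul z (L.mul x v)) := by
  rw [isOsbornOp_iff_of_leftInverse _ (L.leftIsotope_eq_iff v)]
  refine ⟨fun h x y z => ?_, fun h X Y Z => ?_⟩
  · simpa only [leftIsotope, mul_rd] using h (L.mul x v) (L.mul y v) (L.mul z v)
  · obtain ⟨x, rfl⟩ := L.mul_right_surjective v X
    obtain ⟨y, rfl⟩ := L.mul_right_surjective v Y
    obtain ⟨z, rfl⟩ := L.mul_right_surjective v Z
    simpa only [leftIsotope, mul_rd] using h x y z

end LoopStr

open LoopStr

theorem left_universal_osborn_iff {Q : Type*} (L : LoopStr Q) :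
    L.LeftUniversal ↔ ∀ x y z v,
      L.mul x (L.mul (L.rd (L.mul y (L.mul z v)) v) (L.mul x v)) =
      L.mul
        (L.rd
          (L.mul x
            (L.mul (L.rd (L.mul y (L.mul (L.rd v (L.mul x v)) v)) v)
              (L.mul x v)))
          v)
        (L.mul z (L.mul x v)) :=
  (forall_congr' L.isOsbornOp_leftIsotope_iff).trans
    ⟨fun h x y z v => h v x y z, fun h v x y z => h x y z v⟩
end

section
/- In every universal Osborn loop Q the identity uu · (u\(uu·u)) = (u·uu)·u holds for all u ∈ Q. -/
open LoopStr

/-!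
In the `u,u`-principal isotope `x ∗ y = (x/u)·(u\y)` the element `u` acts by
`u ∗ y = u\y` and `y ∗ u = y/u`, so the left inverse of `u` is `(uu)·u`. Instantiating
the Osborn identity of this isotope at `x = u`, `y = (uu)·u`, `z = uu`, its left side
collapses to `u`, and peeling the divisions off the right side gives the identity.
-/

namespace LoopStr

variable {Q : Type*} (L : LoopStr Q)

theorem ld_self (x : Q) : L.ld x x = L.e := by
  simpa only [L.mul_one] using L.ld_mul x L.e

theorem rd_self (x : Q) : L.rd x x = L.e := by
  simpa only [L.one_mul] using L.mul_rd x L.e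

theorem eq_mul_of_ld_eq {x y z : Q} (h : L.ld x y = z) : y = L.mul x z := by
  rw [← h, L.mul_ld]

theorem eq_mul_of_rd_eq {x y z : Q} (h : L.rd y x = z) : y = L.mul z x := by
  rw [← h, L.rd_mul]

theorem isotope_mul_left (u v x y : Q) :
    L.isotope u v (L.mul x v) y = L.mul x (L.ld u y) := by
  rw [isotope, L.mul_rd]

theorem isotope_self_left (u y : Q) : L.isotope u u u y = L.ld u y := by
  simp only [isotope, L.rd_self, L.one_mul]

theorem isotope_self_right (u x : Q) : L.isotope u u x u = L.rd x u := by
  simp only [isotope, L.ld_self, L.mul_one]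

theorem isotope_self_left_inverse (u : Q) :
    L.isotope u u (L.mul (L.mul u u) u) u = L.mul u u := by
  rw [isotope_self_right, L.mul_rd]

/-- The Osborn identity of the `a,a`-isotope at `x = a`, read in `Q`. -/
theorem Universal.ld_rd_isotope_self {L : LoopStr Q} (h : L.Universal) (a y z : Q) :
    L.ld a (L.rd (L.isotope a a y z) a) =
      L.isotope a a (L.ld a (L.rd (L.isotope a a y (L.mul (L.mul a a) a)) a)) (L.rd z a) := by
  simpa only [isotope_self_left, isotope_self_right] using
    h a a a y z _ (L.isotope_self_left_inverse a)

end LoopStr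

theorem universal_osborn_cube_identity {Q : Type*} (L : LoopStr Q)
    (h : L.Universal) (u : Q) :
    L.mul (L.mul u u) (L.ld u (L.mul (L.mul u u) u)) =
      L.mul (L.mul u (L.mul u u)) u := by
  have hosb : L.rd (L.ld u (L.rd (L.mul (L.mul u u) (L.ld u (L.mul (L.mul u u) u))) u)) u = u := by
    simpa only [isotope_mul_left, isotope_self_right, L.mul_rd, L.ld_mul] using
      (h.ld_rd_isotope_self u (L.mul (L.mul u u) u) (L.mul u u)).symm
  exact L.eq_mul_of_rd_eq (L.eq_mul_of_ld_eq (L.eq_mul_of_rd_eq hosb))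
end

section
/- In a left universal Osborn loop Q, the identity v·(vv) = (v^λ\v)·v holds for all v ∈ Q, where v^λ is the left inverse of v. -/
open LoopStr

namespace LoopStr

variable {Q : Type*} (L : LoopStr Q)

theorem lam_mul (x : Q) : L.mul (L.lam x) x = L.e := L.rd_mul x L.e

theorem rd_eq_iff {x y z : Q} : L.rd y x = z ↔ y = L.mul z x := by
  constructor
  · rintro rfl
    exact (L.rd_mul x y).symm
  · rintro rfl
    exact L.mul_rd x z

theorem ld_eq_iff {x y z : Q} : L.ld x y = z ↔ y = L.mul x z := by
  constructor
  · rintro rfl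
    exact (L.mul_ld x y).symm
  · rintro rfl
    exact L.ld_mul x z

variable {L} in
theorem LeftUniversal.rd_cube_eq (h : L.LeftUniversal) (v : Q) :
    L.rd (L.mul v (L.mul v v)) v = L.ld (L.lam v) v := by
  have hvv : L.rd (L.mul v v) v = v := L.mul_rd v v
  -- The Osborn identity of the isotope `x ∗ y = (x/v)·y` at `x = e`, `y = vv`, `z = v`;
  -- there `vv` is a left inverse of `e`, since `(vv/v)·e = v`, and `e ∗ w = v^λ·w`.
  have osborn := h v L.e (L.mul v v) v (L.mul v v) (by simp only [hvv, L.mul_one])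
  simp only [hvv, L.rd_self, L.mul_one] at osborn
  rw [← lam, L.lam_mul, eq_comm, L.rd_eq_iff, L.one_mul] at osborn
  exact (L.ld_eq_iff.2 osborn.symm).symm

end LoopStr

theorem left_universal_osborn_cube {Q : Type*} (L : LoopStr Q)
    (h : L.LeftUniversal) (v : Q) :
    L.mul v (L.mul v v) = L.mul (L.ld (L.lam v) v) v :=
  L.rd_eq_iff.1 (h.rd_cube_eq v)
end

section
/- In a left universal Osborn loop Q, the identity vv·vv = (v^λ\(v^{λλ}·v))·v holds for all v ∈ Q, where v^λ is the left inverse of v and v^{λλ} = (v^λ)^λ. -/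
open LoopStr

namespace LoopStr

variable {Q : Type*} (L : LoopStr Q)

variable {L}

theorem lam_eq_of_mul_eq {x y : Q} (h : L.mul y x = L.e) : L.lam x = y := by
  rw [lam, ← h, L.mul_rd]

/-- The Osborn identity of the left principal isotope `x ∗ y = (x/v)·y` at `x = z = e`; the left
inverse of `e` in that isotope is `v·v`. -/
theorem LeftUniversal.lam_mul_rd_eq (h : L.LeftUniversal) (v t : Q) :
    L.mul (L.lam v) (L.rd t v) =
      L.mul (L.rd (L.mul (L.lam v) (L.rd (L.mul t (L.mul v v)) v)) v) (L.lam v) := by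
  have hinv : L.mul (L.rd (L.mul v v) v) L.e = v := by rw [L.mul_rd, L.mul_one]
  have osborn := h v L.e (L.mul t v) L.e (L.mul v v) hinv
  simpa only [L.mul_rd, L.mul_one, lam] using osborn

end LoopStr

theorem left_universal_osborn_fourth_power {Q : Type*} (L : LoopStr Q)
    (h : L.LeftUniversal) (v : Q) :
    L.mul (L.mul v v) (L.mul v v) =
      L.mul (L.ld (L.lam v) (L.mul (L.lam (L.lam v)) v)) v := by
  have key := h.lam_mul_rd_eq v (L.mul v v)
  rw [L.mul_rd v v, L.lam_mul] at key
  -- `key : e = ((v^λ·(v²v²/v))/v)·v^λ`, so `v^λλ = (v^λ·(v²v²/v))/v`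
  rw [lam_eq_of_mul_eq key.symm, L.rd_mul, L.ld_mul, L.rd_mul]
end

section
/- In every right universal Osborn loop Q, the identity u·((u\(u^ρ·u))·u^ρ) = u^ρ holds for all u ∈ Q, where u^ρ is the right inverse of u. -/
open LoopStr

namespace LoopStr

variable {Q : Type*} (L : LoopStr Q)

theorem e_ld (y : Q) : L.ld L.e y = y := by
  rw [← L.one_mul (L.ld L.e y), L.mul_ld]

theorem mul_right_cancel {a b c : Q} (hab : L.mul a c = L.mul b c) : a = b := by
  rw [← L.mul_rd c a, hab, L.mul_rd]

theorem RightUniversal.isOsbornOp_mul {L : LoopStr Q} (h : L.RightUniversal) :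
    IsOsbornOp L.mul L.e := by
  have hiso : (fun x y => L.mul x (L.ld L.e y)) = L.mul := by
    funext x y
    rw [e_ld]
  exact hiso ▸ h L.e

section Osborn

variable {L} {x l : Q}

theorem mul_mul_left_inv_sq_mul (hO : IsOsbornOp L.mul L.e) (hl : L.mul l x = L.e) :
    L.mul x (L.mul (L.mul l l) x) = L.e := by
  have h := hO x l x l hl
  rw [hl, L.one_mul] at h
  exact L.mul_right_cancel (c := L.mul x x) (by rw [← h, L.one_mul])

theorem mul_mul_left_inv_mul_mul (hO : IsOsbornOp L.mul L.e) (hl : L.mul l x = L.e) (z : Q) :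
    L.mul x (L.mul (L.mul l z) x) = L.mul z x := by
  rw [hO x l z l hl, mul_mul_left_inv_sq_mul hO hl, L.one_mul]

theorem mul_mul_self_eq (hO : IsOsbornOp L.mul L.e) (hl : L.mul l x = L.e) :
    L.mul x (L.mul x x) = L.mul (L.mul x (L.mul (L.mul x l) x)) x := by
  simpa only [L.mul_one, L.one_mul] using hO x x L.e l hl

theorem ld_eq_ld_mul_mul (hO : IsOsbornOp L.mul L.e) (hl : L.mul l x = L.e) :
    L.ld l x = L.mul (L.ld l (L.mul x l)) x := by
  apply L.mul_right_cancel (c := x)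
  calc L.mul (L.ld l x) x
      = L.mul x (L.mul x x) := by rw [← mul_mul_left_inv_mul_mul hO hl (L.ld l x), L.mul_ld]
    _ = L.mul (L.mul x (L.mul (L.mul x l) x)) x := mul_mul_self_eq hO hl
    _ = L.mul (L.mul (L.ld l (L.mul x l)) x) x := by
      rw [← mul_mul_left_inv_mul_mul hO hl (L.ld l (L.mul x l)), L.mul_ld]

theorem mul_ld_mul_mul (hO : IsOsbornOp L.mul L.e) (hl : L.mul l x = L.e) :
    L.mul l (L.mul (L.ld l (L.mul x l)) x) = x := by
  rw [← ld_eq_ld_mul_mul hO hl, L.mul_ld]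

end Osborn

end LoopStr

theorem right_universal_osborn_rho_identity {Q : Type*} (L : LoopStr Q)
    (h : L.RightUniversal) (u : Q) :
    L.mul u (L.mul (L.ld u (L.mul (L.rho u) u)) (L.rho u)) = L.rho u :=
  mul_ld_mul_mul h.isOsbornOp_mul (L.mul_ld u L.e)
end

section
/- Every Moufang loop satisfies the identity [y(x^{-1}u)·u^{-1}](xu) = [y(xu)·u^{-1}](x^{-1}u) for all x,y,u. -/
open LoopStr

/-!
Both sides equal `y·u`. For all `a, b`, the middle Moufang identity
`u⁻¹((b·a⁻¹u)·u⁻¹) = (u⁻¹b)·a⁻¹` followed by the Moufang identity with `u` in the outer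
position gives `((b·a⁻¹u)·u⁻¹)·(au) = bu`; take `a = x` on the left and `a = x⁻¹` on the right.
-/

namespace LoopStr

variable {Q : Type*} (L : LoopStr Q) {inv : Q → Q}

theorem inv_mul_self (hlinv : ∀ x y, L.mul (inv x) (L.mul x y) = y) (a : Q) :
    L.mul (inv a) a = L.e := by
  simpa only [L.mul_one] using hlinv a L.e

theorem inv_inv_eq (hlinv : ∀ x y, L.mul (inv x) (L.mul x y) = y) (a : Q) :
    inv (inv a) = a := by
  simpa only [L.inv_mul_self hlinv, L.mul_one] using hlinv (inv a) a

theorem mul_inv_mul_cancel_left (hlinv : ∀ x y, L.mul (inv x) (L.mul x y) = y) (a b : Q) :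
    L.mul a (L.mul (inv a) b) = b := by
  simpa only [L.inv_inv_eq hlinv] using hlinv (inv a) b

theorem mul_inv_mul_cancel_right (hlinv : ∀ x y, L.mul (inv x) (L.mul x y) = y)
    (hrinv : ∀ x y, L.mul (L.mul y x) (inv x) = y) (a b : Q) :
    L.mul (L.mul b (inv a)) a = b := by
  simpa only [L.inv_inv_eq hlinv] using hrinv (inv a) b

theorem moufang_middle (hMoufang : ∀ x y z,
      L.mul (L.mul x y) (L.mul z x) = L.mul (L.mul x (L.mul y z)) x) (x y z : Q) :
    L.mul x (L.mul (L.mul y z) x) = L.mul (L.mul x y) (L.mul z x) := by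
  have flexible : L.mul x (L.mul (L.mul y z) x) = L.mul (L.mul x (L.mul y z)) x := by
    simpa only [L.mul_one, L.one_mul] using hMoufang x L.e (L.mul y z)
  rw [flexible, hMoufang]

theorem moufang_conj (hMoufang : ∀ x y z,
      L.mul (L.mul x y) (L.mul z x) = L.mul (L.mul x (L.mul y z)) x)
    (hlinv : ∀ x y, L.mul (inv x) (L.mul x y) = y) (a b c : Q) :
    L.mul b (L.mul c a) = L.mul (L.mul a (L.mul (L.mul (inv a) b) c)) a := by
  simpa only [L.mul_inv_mul_cancel_left hlinv] using hMoufang a (L.mul (inv a) b) c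

theorem mul_inv_mul_mul_inv_mul_mul (hMoufang : ∀ x y z,
      L.mul (L.mul x y) (L.mul z x) = L.mul (L.mul x (L.mul y z)) x)
    (hlinv : ∀ x y, L.mul (inv x) (L.mul x y) = y)
    (hrinv : ∀ x y, L.mul (L.mul y x) (inv x) = y) (a b u : Q) :
    L.mul (L.mul (L.mul b (L.mul (inv a) u)) (inv u)) (L.mul a u) = L.mul b u := by
  set A := L.mul (L.mul b (L.mul (inv a) u)) (inv u)
  have hA : L.mul (inv u) A = L.mul (L.mul (inv u) b) (inv a) := by
    rw [L.moufang_middle hMoufang, hrinv]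
  calc L.mul A (L.mul a u)
      = L.mul (L.mul u (L.mul (L.mul (inv u) A) a)) u := L.moufang_conj hMoufang hlinv u A a
    _ = L.mul b u := by
      rw [hA, L.mul_inv_mul_cancel_right hlinv hrinv, L.mul_inv_mul_cancel_left hlinv]

end LoopStr

theorem moufang_new_identity {Q : Type*} (L : LoopStr Q)
    (inv : Q → Q)
    (hMoufang : ∀ x y z,
      L.mul (L.mul x y) (L.mul z x) = L.mul (L.mul x (L.mul y z)) x)
    (hlinv : ∀ x y, L.mul (inv x) (L.mul x y) = y)
    (hrinv : ∀ x y, L.mul (L.mul y x) (inv x) = y)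
    (x y u : Q) :
    L.mul (L.mul (L.mul y (L.mul (inv x) u)) (inv u)) (L.mul x u) =
      L.mul (L.mul (L.mul y (L.mul x u)) (inv u)) (L.mul (inv x) u) := by
  have hx := L.mul_inv_mul_mul_inv_mul_mul hMoufang hlinv hrinv x y u
  have hx' := L.mul_inv_mul_mul_inv_mul_mul hMoufang hlinv hrinv (inv x) y u
  rw [L.inv_inv_eq hlinv] at hx'
  rw [hx, hx']
end
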